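/- arXiv:1905.05484 — 5 statements merged into one kernel-verified Lean document; each statement's English description precedes it below -/
import Mathlib

section
/- Let X be a complete metric space, U ⊆ X an open set, ‖·‖ a norm on ℝ^k, ε > 0, and f : U → ℝ^k a continuous map. Suppose that for every x ∈ U and every v ∈ ℝ^k with f(x) ≠ v there exists y ∈ U with y ≠ x and ‖f(y) − v‖ − ‖f(x) − v‖ ≤ −ε·d(x, y). Then f is ε-open: for every x ∈ U and every v ∈ ℝ^k such that the closed ball of radius ε⁻¹‖f(x) − v‖ around x is contained in U, there exists y ∈ U with f(y) = v and ε·d(x, y) ≤ ‖f(x) − v‖. -/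
/-!
Ekeland's variational principle, applied to `g z = N (f z - v)` on the closed ball
`closedBall x (ε⁻¹ * g x)`, produces a point `y` with `g y + ε * dist x y ≤ g x` at which no
`z ≠ y` satisfies `g z + ε * dist y z ≤ g y`. The descent hypothesis would supply such a `z`
if `f y ≠ v`, so `f y = v`.
-/

open Filter Set Topology

section Brondsted

variable {X : Type*} [MetricSpace X] {ε : ℝ} {g : X → ℝ}

/-- The Brøndsted order of `g` and `ε • dist`: `BrondstedLE ε g z w` says `w` lies after `z`. -/
def BrondstedLE (ε : ℝ) (g : X → ℝ) (z w : X) : Prop :=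
  g w + ε * dist z w ≤ g z

theorem BrondstedLE.refl (z : X) : BrondstedLE ε g z z := by
  simp [BrondstedLE]

theorem BrondstedLE.trans (hε : 0 ≤ ε) {a b c : X} (hab : BrondstedLE ε g a b)
    (hbc : BrondstedLE ε g b c) : BrondstedLE ε g a c := by
  unfold BrondstedLE at *
  nlinarith [dist_triangle a b c]

theorem BrondstedLE.dist_le (hε : 0 < ε) {z w : X} (h : BrondstedLE ε g z w) :
    dist z w ≤ (g z - g w) / ε := by
  rw [le_div_iff₀ hε]
  unfold BrondstedLE at h
  linarith

theorem isClosed_setOf_brondstedLE (hg : LowerSemicontinuous g) (z : X) :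
    IsClosed {w | BrondstedLE ε g z w} :=
  (hg.add (continuous_const.mul (continuous_const.dist continuous_id)).lowerSemicontinuous
    ).isClosed_preimage (g z)

noncomputable def brondstedInf (ε : ℝ) (g : X → ℝ) (z : X) : ℝ :=
  sInf (g '' {w | BrondstedLE ε g z w})

theorem brondstedInf_le (hbdd : BddBelow (range g)) {z w : X} (h : BrondstedLE ε g z w) :
    brondstedInf ε g z ≤ g w :=
  csInf_le (hbdd.mono (image_subset_range _ _)) ⟨w, h, rfl⟩

theorem brondstedInf_mono (hε : 0 ≤ ε) (hbdd : BddBelow (range g)) {z w : X}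
    (h : BrondstedLE ε g z w) : brondstedInf ε g z ≤ brondstedInf ε g w :=
  le_csInf ⟨g w, w, BrondstedLE.refl w, rfl⟩ fun _ ⟨_, hw', hw'_eq⟩ =>
    hw'_eq ▸ brondstedInf_le hbdd (h.trans hε hw')

theorem exists_brondstedLE_gap_le_half (hε : 0 ≤ ε) (hbdd : BddBelow (range g)) (z : X) :
    ∃ w, BrondstedLE ε g z w ∧
      g w - brondstedInf ε g w ≤ (g z - brondstedInf ε g z) / 2 := by
  suffices ∃ w, BrondstedLE ε g z w ∧ g w ≤ (brondstedInf ε g z + g z) / 2 by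
    obtain ⟨w, hzw, hw⟩ := this
    exact ⟨w, hzw, by linarith [brondstedInf_mono hε hbdd hzw]⟩
  rcases (brondstedInf_le hbdd (BrondstedLE.refl z)).lt_or_eq with hlt | heq
  · obtain ⟨_, ⟨w, hzw, rfl⟩, hw⟩ :=
      exists_lt_of_csInf_lt (s := g '' {w | BrondstedLE ε g z w}) ⟨g z, z, BrondstedLE.refl z, rfl⟩
      (show brondstedInf ε g z < (brondstedInf ε g z + g z) / 2 by linarith)
    exact ⟨w, hzw, hw.le⟩
  · exact ⟨z, BrondstedLE.refl z, by linarith⟩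

/-- Ekeland's variational principle. -/
theorem LowerSemicontinuous.exists_brondstedLE_maximal [CompleteSpace X]
    (hg : LowerSemicontinuous g) (hbdd : BddBelow (range g)) (hε : 0 < ε) (x : X) :
    ∃ y, BrondstedLE ε g x y ∧ ∀ z, BrondstedLE ε g y z → z = y := by
  -- Each step halves `g - brondstedInf ε g`, so the points after `u n` lie within
  -- `D * (1 / 2) ^ n` of `u n`: `u` is Cauchy and its limit is the only point after itself.
  choose next h_next h_gap using exists_brondstedLE_gap_le_half hε.le hbdd
  set u : ℕ → X := fun n => next^[n] x
  have hu_succ (n : ℕ) : u (n + 1) = next (u n) := Function.iterate_succ_apply' next n x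
  have hu_le (n : ℕ) : ∀ p, n ≤ p → BrondstedLE ε g (u n) (u p) := by
    refine Nat.le_induction (BrondstedLE.refl _) fun p _ ih => ?_
    exact hu_succ p ▸ ih.trans hε.le (h_next (u p))
  set D := (g x - brondstedInf ε g x) / ε
  have hu_gap (n : ℕ) : g (u n) - brondstedInf ε g (u n) ≤ ε * D * (1 / 2) ^ n := by
    induction n with
    | zero => simp [u, D, mul_div_cancel₀ _ hε.ne']
    | succ n ih =>
      rw [hu_succ, pow_succ]
      linarith [h_gap (u n)]
  have hu_dist (n : ℕ) {w : X} (h : BrondstedLE ε g (u n) w) : dist (u n) w ≤ D * (1 / 2) ^ n := by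
    calc dist (u n) w ≤ (g (u n) - g w) / ε := h.dist_le hε
      _ ≤ (ε * D * (1 / 2) ^ n) / ε := by
        gcongr; linarith [hu_gap n, brondstedInf_le hbdd h]
      _ = D * (1 / 2) ^ n := by field_simp
  obtain ⟨y, hy⟩ := cauchySeq_tendsto_of_complete <|
    cauchySeq_of_le_geometric _ D (by norm_num) fun n => hu_dist n (hu_le n _ n.le_succ)
  have hy_after (n : ℕ) : BrondstedLE ε g (u n) y :=
    (isClosed_setOf_brondstedLE hg (u n)).mem_of_tendsto hy
      ((eventually_ge_atTop n).mono (hu_le n))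
  refine ⟨y, hy_after 0, fun z hz => ?_⟩
  have hD : Tendsto (fun n => D * (1 / 2) ^ n) atTop (𝓝 0) := by
    simpa using (tendsto_pow_atTop_nhds_zero_of_lt_one (r := (1 / 2 : ℝ))
      (by norm_num) (by norm_num)).const_mul D
  have hyz : dist y z ≤ 0 := le_of_tendsto_of_tendsto' (hy.dist tendsto_const_nhds) hD
    fun n => hu_dist n ((hy_after n).trans hε.le hz)
  exact (dist_le_zero.mp hyz).symm

theorem LowerSemicontinuousOn.exists_brondstedLE_maximal [CompleteSpace X] {S : Set X}
    (hg : LowerSemicontinuousOn g S) (hS : IsClosed S) (hbdd : BddBelow (g '' S)) (hε : 0 < ε)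
    {x : X} (hx : x ∈ S) (hxS : ∀ z, BrondstedLE ε g x z → z ∈ S) :
    ∃ y ∈ S, BrondstedLE ε g x y ∧ ∀ z, BrondstedLE ε g y z → z = y := by
  have : CompleteSpace S := hS.completeSpace_coe
  obtain ⟨y, hxy, hy⟩ := (lowerSemicontinuous_restrict_iff.mpr hg).exists_brondstedLE_maximal
    (by rwa [range_domRestrict]) hε ⟨x, hx⟩
  refine ⟨y, y.2, hxy, fun z hz => ?_⟩
  exact congrArg Subtype.val (hy ⟨z, hxS z ((show BrondstedLE ε g x y from hxy).trans hε.le hz)⟩ hz)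

theorem BrondstedLE.mem_closedBall (hε : 0 < ε) {z w : X} (hw : 0 ≤ g w)
    (h : BrondstedLE ε g z w) : w ∈ Metric.closedBall z (ε⁻¹ * g z) := by
  rw [Metric.mem_closedBall, dist_comm, inv_mul_eq_div]
  exact (h.dist_le hε).trans (by gcongr; linarith)

end Brondsted

theorem stmt_0_general {X : Type*} [MetricSpace X] [CompleteSpace X] {k : ℕ}
    (N : Seminorm ℝ (Fin k → ℝ))
    (U : Set X) (ε : ℝ) (hε : 0 < ε)
    (f : X → (Fin k → ℝ)) (hf : ContinuousOn f U)
    (hdesc : ∀ x ∈ U, ∀ v : Fin k → ℝ, f x ≠ v →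
      ∃ y ∈ U, y ≠ x ∧ N (f y - v) - N (f x - v) ≤ -ε * dist x y) :
    ∀ x ∈ U, ∀ v : Fin k → ℝ,
      Metric.closedBall x (ε⁻¹ * N (f x - v)) ⊆ U →
      ∃ y ∈ U, f y = v ∧ ε * dist x y ≤ N (f x - v) := by
  intro x _ v hball
  set g : X → ℝ := fun z => N (f z - v)
  have hg : ContinuousOn g U :=
    N.convexOn.locallyLipschitz.continuous.comp_continuousOn (hf.sub continuousOn_const)
  obtain ⟨y, hyB, hxy, hy⟩ := (hg.mono hball).lowerSemicontinuousOn.exists_brondstedLE_maximal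
    Metric.isClosed_closedBall ⟨0, by rintro _ ⟨z, -, rfl⟩; exact apply_nonneg N _⟩ hε
    (Metric.mem_closedBall_self (by positivity))
    fun z => BrondstedLE.mem_closedBall hε (apply_nonneg N _)
  refine ⟨y, hball hyB, ?_, by linarith [apply_nonneg N (f y - v), show g y + _ ≤ g x from hxy]⟩
  by_contra hne
  obtain ⟨z, -, hzy, hz⟩ := hdesc y (hball hyB) v hne
  exact hzy (hy z (by unfold BrondstedLE; linarith))

theorem stmt_0 {X : Type*} [MetricSpace X] [CompleteSpace X] {k : ℕ}
    (N : Seminorm ℝ (Fin k → ℝ)) (hN : ∀ v : Fin k → ℝ, N v = 0 → v = 0)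
    (U : Set X) (hU : IsOpen U) (ε : ℝ) (hε : 0 < ε)
    (f : X → (Fin k → ℝ)) (hf : ContinuousOn f U)
    (hdesc : ∀ x ∈ U, ∀ v : Fin k → ℝ, f x ≠ v →
      ∃ y ∈ U, y ≠ x ∧ N (f y - v) - N (f x - v) ≤ -ε * dist x y) :
    ∀ x ∈ U, ∀ v : Fin k → ℝ,
      Metric.closedBall x (ε⁻¹ * N (f x - v)) ⊆ U →
      ∃ y ∈ U, f y = v ∧ ε * dist x y ≤ N (f x - v) :=
  stmt_0_general N U ε hε f hf hdesc
end

section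
/- Let X be a metric space, U ⊆ X, ‖·‖ a norm on ℝ^k, and f, g : U → ℝ^k maps satisfying ‖(f(x) − f(y)) − (g(x) − g(y))‖ ≤ δ·d(x, y) for all x, y ∈ U, where 0 ≤ δ < ε. Suppose g satisfies the descent condition with constant ε: for every x ∈ U and every w ∈ ℝ^k with g(x) ≠ w there exists y ∈ U, y ≠ x, with ‖g(y) − w‖ − ‖g(x) − w‖ ≤ −ε·d(x, y). Then f satisfies the descent condition with constant ε − δ: for every x ∈ U and every v ∈ ℝ^k with f(x) ≠ v there exists y ∈ U, y ≠ x, with ‖f(y) − v‖ − ‖f(x) − v‖ ≤ −(ε − δ)·d(x, y). -/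
/-! Given `f(x) ≠ v`, apply the descent condition of `g` at `x` to the shifted target
`w = v - (f x - g x)`, so that `f x - v = g x - w`. At the point `y` it provides,
`f y - v = (g y - w) + ((f y - f x) - (g y - g x))`, and the second summand costs at most
`δ · d(x, y)` by almost regularity. -/

section Descent

variable {X E F : Type*} [MetricSpace X] [AddCommGroup E] [FunLike F E ℝ]
  [AddGroupSeminormClass F E ℝ]

def HasLinearDescent (N : F) (U : Set X) (g : X → E) (c : ℝ) : Prop :=
  ∀ x ∈ U, ∀ w : E, g x ≠ w → ∃ y ∈ U, y ≠ x ∧ N (g y - w) - N (g x - w) ≤ -c * dist x y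

theorem sub_descent_le_of_shift (N : F) {f g : X → E} {x y : X} {v : E} {δ ε : ℝ}
    (hfg : N ((f y - f x) - (g y - g x)) ≤ δ * dist x y)
    (hg : N (g y - (v - (f x - g x))) - N (g x - (v - (f x - g x))) ≤ -ε * dist x y) :
    N (f y - v) - N (f x - v) ≤ -(ε - δ) * dist x y := by
  have hx : f x - v = g x - (v - (f x - g x)) := by abel
  have hy : N (f y - v) ≤ N (g y - (v - (f x - g x))) + δ * dist x y :=
    calc N (f y - v) = N ((g y - (v - (f x - g x))) + ((f y - f x) - (g y - g x))) := by
          congr 1; abel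
      _ ≤ N (g y - (v - (f x - g x))) + N ((f y - f x) - (g y - g x)) := map_add_le_add N _ _
      _ ≤ N (g y - (v - (f x - g x))) + δ * dist x y := by gcongr
  rw [hx]
  linarith

theorem HasLinearDescent.of_almostRegular {N : F} {U : Set X} {f g : X → E} {δ ε : ℝ}
    (hfg : ∀ x ∈ U, ∀ y ∈ U, N ((f x - f y) - (g x - g y)) ≤ δ * dist x y)
    (hg : HasLinearDescent N U g ε) : HasLinearDescent N U f (ε - δ) := by
  intro x hx v hv
  have hshift : g x ≠ v - (f x - g x) := fun h => hv (by rw [← sub_eq_zero] at h ⊢; rw [← h]; abel)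
  obtain ⟨y, hy, hyx, hdesc⟩ := hg x hx _ hshift
  refine ⟨y, hy, hyx, sub_descent_le_of_shift N ?_ hdesc⟩
  simpa only [dist_comm] using hfg y hy x hx

end Descent

theorem stmt_1_general {X : Type*} [MetricSpace X] {k : ℕ}
    (N : Seminorm ℝ (Fin k → ℝ))
    (U : Set X) (f g : X → (Fin k → ℝ)) (δ ε : ℝ)
    (hfg : ∀ x ∈ U, ∀ y ∈ U, N ((f x - f y) - (g x - g y)) ≤ δ * dist x y)
    (hg : ∀ x ∈ U, ∀ w : Fin k → ℝ, g x ≠ w →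
      ∃ y ∈ U, y ≠ x ∧ N (g y - w) - N (g x - w) ≤ -ε * dist x y) :
    ∀ x ∈ U, ∀ v : Fin k → ℝ, f x ≠ v →
      ∃ y ∈ U, y ≠ x ∧ N (f y - v) - N (f x - v) ≤ -(ε - δ) * dist x y :=
  HasLinearDescent.of_almostRegular hfg hg

theorem stmt_1 {X : Type*} [MetricSpace X] {k : ℕ}
    (N : Seminorm ℝ (Fin k → ℝ)) (hN : ∀ v : Fin k → ℝ, N v = 0 → v = 0)
    (U : Set X) (f g : X → (Fin k → ℝ)) (δ ε : ℝ) (hδ0 : 0 ≤ δ) (hδε : δ < ε)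
    (hfg : ∀ x ∈ U, ∀ y ∈ U, N ((f x - f y) - (g x - g y)) ≤ δ * dist x y)
    (hg : ∀ x ∈ U, ∀ w : Fin k → ℝ, g x ≠ w →
      ∃ y ∈ U, y ≠ x ∧ N (g y - w) - N (g x - w) ≤ -ε * dist x y) :
    ∀ x ∈ U, ∀ v : Fin k → ℝ, f x ≠ v →
      ∃ y ∈ U, y ≠ x ∧ N (f y - v) - N (f x - v) ≤ -(ε - δ) * dist x y :=
  stmt_1_general N U f g δ ε hfg hg
end

section
/- Let X be a metric space, u, w : X → ℝ^k maps, μ ≥ 0, δ ≥ 0, L ≥ 0, and χ : X → [0, 1] an L-Lipschitz function. Suppose ‖u(x) − w(x)‖ ≤ μ for all x ∈ X, and ‖(u(x) − u(y)) − (w(x) − w(y))‖ ≤ δ·d(x, y) for all x, y ∈ X. Define z := (1 − χ)·u + χ·w. Then ‖(z(x) − z(y)) − (w(x) − w(y))‖ ≤ (δ + L·μ)·d(x, y) for all x, y ∈ X. -/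
section

variable {E : Type*} [AddCommGroup E] [Module ℝ E]

lemma interpolate_sub_interpolate_sub_sub (a b : ℝ) (u u' w w' : E) :
    ((1 - a) • u + a • w - ((1 - b) • u' + b • w')) - (w - w')
      = (1 - a) • ((u - u') - (w - w')) + (b - a) • (u' - w') := by
  module

lemma Seminorm.interpolate_increment_le (p : Seminorm ℝ E) {a : ℝ} (ha : a ∈ Set.Icc (0 : ℝ) 1)
    (b : ℝ) (u u' w w' : E) :
    p (((1 - a) • u + a • w - ((1 - b) • u' + b • w')) - (w - w'))
      ≤ p ((u - u') - (w - w')) + |a - b| * p (u' - w') := by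
  rw [interpolate_sub_interpolate_sub_sub]
  have h1a : |1 - a| ≤ 1 := abs_le.2 ⟨by linarith [ha.2], by linarith [ha.1]⟩
  calc p ((1 - a) • ((u - u') - (w - w')) + (b - a) • (u' - w'))
      ≤ |1 - a| * p ((u - u') - (w - w')) + |b - a| * p (u' - w') := by
        simpa only [map_smul_eq_mul, Real.norm_eq_abs] using map_add_le_add p
          ((1 - a) • ((u - u') - (w - w'))) ((b - a) • (u' - w'))
    _ ≤ p ((u - u') - (w - w')) + |a - b| * p (u' - w') := by
        rw [abs_sub_comm b a]
        gcongr
        exact mul_le_of_le_one_left (apply_nonneg p _) h1a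

end

theorem stmt_4_general {X : Type*} [MetricSpace X] {k : ℕ}
    (N : Seminorm ℝ (Fin k → ℝ))
    (u w : X → (Fin k → ℝ)) (μ δ L : ℝ)
    (χ : X → ℝ) (hχ01 : ∀ x, χ x ∈ Set.Icc (0 : ℝ) 1)
    (hχL : ∀ x y, |χ x - χ y| ≤ L * dist x y)
    (hclose : ∀ x, N (u x - w x) ≤ μ)
    (hincr : ∀ x y, N ((u x - u y) - (w x - w y)) ≤ δ * dist x y) :
    ∀ x y, N (((fun t => (1 - χ t) • u t + χ t • w t) x
          - (fun t => (1 - χ t) • u t + χ t • w t) y)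
        - (w x - w y)) ≤ (δ + L * μ) * dist x y := by
  intro x y
  calc _ ≤ N ((u x - u y) - (w x - w y)) + |χ x - χ y| * N (u y - w y) :=
        N.interpolate_increment_le (hχ01 x) (χ y) _ _ _ _
    _ ≤ δ * dist x y + L * dist x y * μ := by
        gcongr
        exacts [hincr x y, (abs_nonneg _).trans (hχL x y), hχL x y, hclose y]
    _ = (δ + L * μ) * dist x y := by ring

theorem stmt_4 {X : Type*} [MetricSpace X] {k : ℕ}
    (N : Seminorm ℝ (Fin k → ℝ)) (hN : ∀ v : Fin k → ℝ, N v = 0 → v = 0)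
    (u w : X → (Fin k → ℝ)) (μ δ L : ℝ) (hμ : 0 ≤ μ) (hδ : 0 ≤ δ) (hL : 0 ≤ L)
    (χ : X → ℝ) (hχ01 : ∀ x, χ x ∈ Set.Icc (0 : ℝ) 1)
    (hχL : ∀ x y, |χ x - χ y| ≤ L * dist x y)
    (hclose : ∀ x, N (u x - w x) ≤ μ)
    (hincr : ∀ x y, N ((u x - u y) - (w x - w y)) ≤ δ * dist x y) :
    ∀ x y, N (((fun t => (1 - χ t) • u t + χ t • w t) x
          - (fun t => (1 - χ t) • u t + χ t • w t) y)
        - (w x - w y)) ≤ (δ + L * μ) * dist x y :=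
  stmt_4_general N u w μ δ L χ hχ01 hχL hclose hincr
end

section
/- Let X be a metric space, F ⊆ X, c ∈ (0, 1], and x, y ∈ F. Suppose that for every pair of distinct points a, b ∈ F and every ε > 0 there exists z ∈ F with 0 < d(a, z) < ε and d(b, z) ≤ d(b, a) − c·d(a, z). Assume F is compact. Then for every ε > 0 there exists a finite chain x = p₀, p₁, …, p_N = y of points of F with d(p_{i−1}, p_i) ≤ ε for all i and Σ_{i=1}^{N} d(p_{i−1}, p_i) ≤ c⁻¹·d(x, y). -/
/-!
Walk greedily: from `a`, step to the point `z ∈ F` with `dist a z ≤ ε` and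
`c * dist a z + dist y z ≤ dist y a` that is farthest from `a` (it exists by compactness), or to
`y` itself once `y` is within `ε`. Along the walk `c * (length so far) + dist y (current point)`
never increases, so the total length is at most `dist x y / c`; in particular the walk is Cauchy
and converges to some `w ∈ F`. If the walk never reached `y`, then `w` would admit no short step
making progress towards `y`, because every such step would eventually be available from the walk
and longer than its vanishing greedy steps. The hypothesis on `F` forces `w = y`, so the walk comes
within `ε` of `y` after all and jumps to it, which costs nothing extra as `c ≤ 1`.
-/

open Filter Topology

section GreedyWalk

variable {X : Type*} [MetricSpace X] {F : Set X} {c ε : ℝ} {y a b z w : X} {p : ℕ → X}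

/-- The Brøndsted order of `dist y · / c`. -/
def MovesToward (c : ℝ) (y a b : X) : Prop :=
  c * dist a b + dist y b ≤ dist y a

namespace MovesToward

theorem refl : MovesToward c y a a := by
  simp [MovesToward]

theorem target (hc1 : c ≤ 1) : MovesToward c y a y := by
  simpa [MovesToward, dist_comm] using mul_le_of_le_one_left dist_nonneg hc1

theorem trans (hc0 : 0 ≤ c) (hab : MovesToward c y a b) (hbz : MovesToward c y b z) :
    MovesToward c y a z := by
  unfold MovesToward at *
  nlinarith [dist_triangle a b z]

theorem isClosed_setOf : IsClosed {b | MovesToward c y a b} :=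
  isClosed_le (by fun_prop) continuous_const

end MovesToward

def admissibleSteps (F : Set X) (c ε : ℝ) (y a : X) : Set X :=
  {z ∈ F | dist a z ≤ ε ∧ MovesToward c y a z}

theorem IsCompact.admissibleSteps (hF : IsCompact F) :
    IsCompact (admissibleSteps F c ε y a) := by
  have hclosed : IsClosed {z | dist a z ≤ ε} := isClosed_le (by fun_prop) continuous_const
  exact hF.inter_right (hclosed.inter MovesToward.isClosed_setOf)

theorem exists_greedy_step (hF : IsCompact F) (ha : a ∈ F) (hy : y ∈ F) (hc1 : c ≤ 1)
    (hε : 0 ≤ ε) :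
    ∃ z ∈ admissibleSteps F c ε y a, z = y ∨
      ε < dist a y ∧ ∀ z' ∈ admissibleSteps F c ε y a, dist a z' ≤ dist a z := by
  rcases le_or_gt (dist a y) ε with hay | hay
  · exact ⟨y, ⟨hy, hay, .target hc1⟩, .inl rfl⟩
  · obtain ⟨z, hz, hmax⟩ := hF.admissibleSteps.exists_isMaxOn
      ⟨a, ha, by simpa using hε, .refl⟩ (continuous_const.dist continuous_id).continuousOn
    exact ⟨z, hz, .inr ⟨hay, hmax⟩⟩

theorem movesToward_of_le (hc0 : 0 ≤ c) (hp : ∀ n, MovesToward c y (p n) (p (n + 1)))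
    {m n : ℕ} (hmn : m ≤ n) : MovesToward c y (p m) (p n) := by
  induction n, hmn using Nat.le_induction with
  | base => exact .refl
  | succ n _ ih => exact ih.trans hc0 (hp n)

theorem mul_sum_range_add_dist_le (hp : ∀ n, MovesToward c y (p n) (p (n + 1))) (n : ℕ) :
    c * ∑ i ∈ Finset.range n, dist (p i) (p (i + 1)) + dist y (p n) ≤ dist y (p 0) := by
  induction n with
  | zero => simp
  | succ n ih =>
    have := hp n
    unfold MovesToward at this
    rw [Finset.sum_range_succ, mul_add]
    linarith

theorem cauchySeq_of_movesToward (hc0 : 0 < c) (hp : ∀ n, MovesToward c y (p n) (p (n + 1))) :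
    CauchySeq p := by
  refine cauchySeq_of_dist_le_of_summable _ (fun n => le_rfl) ?_
  refine summable_of_sum_range_le (c := c⁻¹ * dist y (p 0)) (fun n => dist_nonneg) fun n => ?_
  rw [le_inv_mul_iff₀ hc0]
  linarith [mul_sum_range_add_dist_le hp n, dist_nonneg (x := y) (y := p n)]

theorem movesToward_limit (hc0 : 0 ≤ c) (hp : ∀ n, MovesToward c y (p n) (p (n + 1)))
    (hlim : Tendsto p atTop (𝓝 w)) (m : ℕ) : MovesToward c y (p m) w :=
  MovesToward.isClosed_setOf.mem_of_tendsto hlim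
    (eventually_ge_atTop m |>.mono fun _ => movesToward_of_le hc0 hp)

theorem eq_of_mem_admissibleSteps_limit (hc0 : 0 ≤ c)
    (hstep : ∀ n, p (n + 1) ∈ admissibleSteps F c ε y (p n))
    (hgreedy : ∀ n, ∀ z ∈ admissibleSteps F c ε y (p n), dist (p n) z ≤ dist (p n) (p (n + 1)))
    (hlim : Tendsto p atTop (𝓝 w)) (hzF : z ∈ F) (hwz : dist w z < ε)
    (hmoves : MovesToward c y w z) : z = w := by
  have hsteps : Tendsto (fun n => dist (p n) (p (n + 1))) atTop (𝓝 0) := by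
    simpa using hlim.dist (hlim.comp (tendsto_add_atTop_nat 1))
  have hdist : Tendsto (fun n => dist (p n) z) atTop (𝓝 (dist w z)) :=
    hlim.dist tendsto_const_nhds
  have hle : ∀ᶠ n in atTop, dist (p n) z ≤ dist (p n) (p (n + 1)) := by
    filter_upwards [hdist.eventually_lt_const hwz] with n hn
    exact hgreedy n z ⟨hzF, hn.le,
      (movesToward_limit hc0 (fun k => (hstep k).2.2) hlim n).trans hc0 hmoves⟩
  exact (dist_le_zero.mp (le_of_tendsto_of_tendsto hdist hsteps hle)).symm

theorem exists_eq_of_greedy (hc0 : 0 < c) (hF : IsCompact F) (hε : 0 < ε)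
    (hmove : ∀ w ∈ F, w ≠ y → ∃ z ∈ F, z ≠ w ∧ dist w z < ε ∧ MovesToward c y w z)
    (hpF : ∀ n, p n ∈ F) (hstep : ∀ n, p (n + 1) ∈ admissibleSteps F c ε y (p n))
    (hgreedy : ∀ n, p (n + 1) = y ∨ ε < dist (p n) y ∧
      ∀ z ∈ admissibleSteps F c ε y (p n), dist (p n) z ≤ dist (p n) (p (n + 1))) :
    ∃ n, p n = y := by
  by_contra! hne
  have hgreedy' (n : ℕ) := (hgreedy n).resolve_left (hne (n + 1))
  obtain ⟨w, hwF, hlim⟩ := cauchySeq_tendsto_of_isComplete hF.isComplete hpF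
    (cauchySeq_of_movesToward hc0 fun n => (hstep n).2.2)
  have hwy : w = y := by
    by_contra hwy
    obtain ⟨z, hzF, hzw, hwz, hmoves⟩ := hmove w hwF hwy
    exact hzw (eq_of_mem_admissibleSteps_limit hc0.le hstep (fun n => (hgreedy' n).2) hlim hzF
      hwz hmoves)
  have hdist : Tendsto (fun n => dist (p n) y) atTop (𝓝 0) := by
    simpa [hwy] using hlim.dist (tendsto_const_nhds (x := y))
  obtain ⟨m, hm⟩ := (hdist.eventually_lt_const hε).exists
  exact (hgreedy' m).1.not_gt hm

end GreedyWalk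

theorem stmt_6 {X : Type*} [MetricSpace X]
    (F : Set X) (c : ℝ) (hc0 : 0 < c) (hc1 : c ≤ 1)
    (hF : IsCompact F) (x y : X) (hx : x ∈ F) (hy : y ∈ F)
    (hmove : ∀ a ∈ F, ∀ b ∈ F, a ≠ b → ∀ ε > 0,
      ∃ z ∈ F, 0 < dist a z ∧ dist a z < ε ∧ dist b z ≤ dist b a - c * dist a z) :
    ∀ ε > 0, ∃ (n : ℕ) (p : ℕ → X),
      p 0 = x ∧ p n = y ∧ (∀ i ≤ n, p i ∈ F) ∧
      (∀ i < n, dist (p i) (p (i + 1)) ≤ ε) ∧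
      (∑ i ∈ Finset.range n, dist (p i) (p (i + 1))) ≤ c⁻¹ * dist x y := by
  intro ε hε
  choose! f hfstep hfgreedy using fun a (ha : a ∈ F) => exists_greedy_step hF ha hy hc1 hε.le
  set p : ℕ → X := fun n => f^[n] x
  have hpsucc (n : ℕ) : p (n + 1) = f (p n) := Function.iterate_succ_apply' f n x
  have hpF (n : ℕ) : p n ∈ F := by
    induction n with
    | zero => exact hx
    | succ n ih => exact hpsucc n ▸ (hfstep _ ih).1
  have hstep (n : ℕ) : p (n + 1) ∈ admissibleSteps F c ε y (p n) := hpsucc n ▸ hfstep _ (hpF n)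
  have hgreedy (n : ℕ) : p (n + 1) = y ∨ ε < dist (p n) y ∧
      ∀ z ∈ admissibleSteps F c ε y (p n), dist (p n) z ≤ dist (p n) (p (n + 1)) :=
    hpsucc n ▸ hfgreedy _ (hpF n)
  have hprogress (w : X) (hw : w ∈ F) (hwy : w ≠ y) :
      ∃ z ∈ F, z ≠ w ∧ dist w z < ε ∧ MovesToward c y w z := by
    obtain ⟨z, hz, hwz, hwzε, hzy⟩ := hmove w hw y hy hwy ε hε
    exact ⟨z, hz, (dist_pos.mp hwz).symm, hwzε, by unfold MovesToward; linarith⟩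
  obtain ⟨n, hn⟩ := exists_eq_of_greedy hc0 hF hε hprogress hpF hstep hgreedy
  refine ⟨n, p, rfl, hn, fun i _ => hpF i, fun i _ => (hstep i).2.1, ?_⟩
  rw [le_inv_mul_iff₀ hc0, dist_comm]
  have hp0 : p 0 = x := rfl
  simpa [hn, hp0] using mul_sum_range_add_dist_le (fun i => (hstep i).2.2) n
end

section
/- Let X be a metric space, U ⊆ X, f : U → ℝ^k, σ : U → ℝ a 1-Lipschitz function, and positive constants M, M₁, M₂, δ with M₁ ≤ δ and M₁ ≤ M·M₂/2 and M₁ < M₂. Define S := { x ∈ U : σ(x) − σ(y) ≥ M·d(x, y) for all y ∈ U with ‖f(x) − f(y)‖ < δ·d(x, y) }. Suppose further that for every y ∈ S and every v ∈ f(S) there exists x₁ ∈ U with f(x₁) = v and M₂·d(y, x₁) ≤ ‖f(y) − v‖. Then for any p ∈ S, every x ∈ S satisfies d(p, x) ≤ M₁⁻¹·‖f(p) − f(x)‖. -/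
theorem stmt_17 {X : Type*} [MetricSpace X] {k : ℕ}
    (N : Seminorm ℝ (Fin k → ℝ)) (hN : ∀ v : Fin k → ℝ, N v = 0 → v = 0)
    (U : Set X) (f : X → (Fin k → ℝ)) (σ : X → ℝ)
    (hσ : ∀ x ∈ U, ∀ y ∈ U, |σ x - σ y| ≤ dist x y)
    (M M₁ M₂ δ : ℝ) (hM : 0 < M) (hM₁ : 0 < M₁) (hM₂ : 0 < M₂) (hδ : 0 < δ)
    (hM₁δ : M₁ ≤ δ) (hM₁M : M₁ ≤ M * M₂ / 2) (hM₁M₂ : M₁ < M₂) :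
    ∀ S : Set X,
      S = { x ∈ U | ∀ y ∈ U,
        N (f x - f y) < δ * dist x y → σ x - σ y ≥ M * dist x y } →
      (∀ y ∈ S, ∀ v ∈ f '' S, ∃ x₁ ∈ U, f x₁ = v ∧ M₂ * dist y x₁ ≤ N (f y - v)) →
      ∀ p ∈ S, ∀ x ∈ S, dist p x ≤ M₁⁻¹ * N (f p - f x) := by
  intro S hS hopen p hp x hx
  rw [hS] at hp hx
  obtain ⟨hpU, hpS⟩ := hp
  obtain ⟨hxU, hxS⟩ := hx
  by_cases h : N (f p - f x) < δ * dist p x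
  · have h1 := hpS x hxU h
    have h2 : N (f x - f p) < δ * dist x p := by
      rwa [← neg_sub, map_neg_eq_map, dist_comm]
    have h3 := hxS p hpU h2
    have hd : dist p x = 0 := by
      rw [dist_comm x p] at h3
      nlinarith [dist_nonneg (x := p) (y := x)]
    rw [hd]
    positivity
  · push_neg at h
    calc dist p x ≤ M₁⁻¹ * (δ * dist p x) := by
          rw [le_inv_mul_iff₀ hM₁]
          have := dist_nonneg (x := p) (y := x)
          nlinarith
      _ ≤ M₁⁻¹ * N (f p - f x) := by
          exact mul_le_mul_of_nonneg_left h (by positivity)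
end
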